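/- arXiv:2203.02596 — 11 statements merged into one kernel-verified Lean document; each statement's English description precedes it below -/
import Mathlib

section
/- Fix 0 < q ≤ 2 and b ∈ ℝ. If 0 is a global minimizer of F(ω, q, b) for some ω > 0, and ω' > ω, then 0 is a global minimizer of F(ω', q, b). (Sparsity of the mode-thresholding function is nested in ω for fixed q: h(ω, q; b) = 0 and ω' > ω imply h(ω', q; b) = 0.) -/
/-- The scalar objective `F(ω, q, b)(β) = (1/2)(b − β)² + (ω^(2−q)/q)·|β|^q`,
with real-exponent powers (`rpow`). -/
noncomputable def F (ω q b β : ℝ) : ℝ :=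
  (1 / 2) * (b - β) ^ 2 + (ω ^ (2 - q) / q) * |β| ^ q

/-- Sparsity of the mode-thresholding function is nested in ω for fixed q:
if 0 is a global minimizer of `F ω q b` and `ω' > ω`, then 0 is a global
minimizer of `F ω' q b`. -/
theorem sparsity_nested_in_omega (q b : ℝ) (hq0 : 0 < q) (hq2 : q ≤ 2)
    (ω ω' : ℝ) (hω : 0 < ω) (hωω' : ω < ω')
    (h0 : ∀ β : ℝ, F ω q b 0 ≤ F ω q b β) :
    ∀ β : ℝ, F ω' q b 0 ≤ F ω' q b β := by
  intro β
  have h0β : |(0 : ℝ)| ^ q = 0 := by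
    simp [Real.zero_rpow hq0.ne']
  have hzero : F ω' q b 0 = F ω q b 0 := by
    simp [F, h0β, Real.zero_rpow hq0.ne']
  have hpow : ω ^ (2 - q) ≤ ω' ^ (2 - q) :=
    Real.rpow_le_rpow hω.le hωω'.le (by linarith)
  have habs : (0 : ℝ) ≤ |β| ^ q := Real.rpow_nonneg (abs_nonneg β) q
  have hmul : (ω ^ (2 - q) / q) * |β| ^ q ≤ (ω' ^ (2 - q) / q) * |β| ^ q := by
    gcongr
  calc F ω' q b 0 = F ω q b 0 := hzero
    _ ≤ F ω q b β := h0 β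
    _ ≤ F ω' q b β := by unfold F; linarith
end

section
/- Let b ∈ ℝ with b ≠ 0, and let q satisfy either 1 < q ≤ 2, or 0 < q ≤ 1 together with (2/(2−q))·(2(1−q))^((1−q)/(2−q))·q^(1/(2−q)) > 1. Then b/2 is a global minimizer of F(|b|/2, q, b); that is, h(ω = |b|/2, q; b) = b/2. -/
/-
Substituting `β = ω y` with `ω = |b|/2` turns `F ω q b` into `ω²·F 1 q c` with `|c| = 2`, so it
suffices to show `1/2 + 1/q ≤ (2 - x)²/2 + x^q/q` for `x ≥ 0` (take `x = |y|`, using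
`(c - y)² ≥ (2 - |y|)²`). As `(x^p - 1)/p` is nondecreasing in `p` (Bernoulli's inequality), the
case `q ≥ 2/3` reduces to `q = 2/3`, where with `x = t³` the difference of the two sides is
`t²(t - 1)²(t² + 2t + 3)/2`. Finally, for `q ≤ 1` weighted AM-GM bounds the constant in the
hypothesis by `2(2(1 - q)² + q)/(2 - q)²`, which is at most `1` as soon as `q ≤ 2/3`.
-/

open Real

lemma F_eq_sq_mul_F_one {ω : ℝ} (hω : 0 < ω) (q b β : ℝ) :
    F ω q b β = ω ^ 2 * F 1 q (b / ω) (β / ω) := by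
  have hωq : ω ^ q ≠ 0 := (rpow_pos_of_pos hω q).ne'
  rw [F, F, one_rpow, abs_div, abs_of_pos hω, div_rpow (abs_nonneg β) hω.le, rpow_sub hω,
    rpow_two]
  field_simp

lemma rpow_sub_one_div_le_rpow_sub_one_div {x p r : ℝ} (hx : 0 ≤ x) (hp : 0 < p) (hpr : p ≤ r) :
    (x ^ p - 1) / p ≤ (x ^ r - 1) / r := by
  have hbern := one_add_mul_self_le_rpow_one_add (s := x ^ p - 1)
    (by linarith [rpow_nonneg hx p]) ((one_le_div hp).2 hpr)
  rw [add_sub_cancel, ← rpow_mul hx, mul_div_cancel₀ _ hp.ne'] at hbern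
  rw [div_le_div_iff₀ hp (hp.trans_le hpr)]
  have := mul_le_mul_of_nonneg_left hbern hp.le
  field_simp at this
  linarith

lemma half_add_inv_le_of_two_thirds_le {q x : ℝ} (hq : 2 / 3 ≤ q) (hx : 0 ≤ x) :
    1 / 2 + 1 / q ≤ 1 / 2 * (2 - x) ^ 2 + x ^ q / q := by
  obtain ⟨t, ht, rfl⟩ : ∃ t, 0 ≤ t ∧ t ^ 3 = x :=
    ⟨x ^ (1 / 3 : ℝ), rpow_nonneg hx _, by rw [← rpow_natCast, ← rpow_mul hx]; norm_num⟩
  have hmono := rpow_sub_one_div_le_rpow_sub_one_div (pow_nonneg ht 3) (by norm_num) hq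
  have hcube : (t ^ 3) ^ (2 / 3 : ℝ) = t ^ 2 := by
    rw [← rpow_natCast, ← rpow_mul ht]; norm_num
  rw [hcube, sub_div _ 1 q] at hmono
  have hkey : 0 ≤ t ^ 2 * (t - 1) ^ 2 * (t ^ 2 + 2 * t + 3) := by
    have : 0 ≤ t ^ 2 + 2 * t + 3 := by nlinarith [sq_nonneg (t + 1)]
    positivity
  nlinarith

lemma two_thirds_lt_of_one_lt {q : ℝ} (hq0 : 0 < q)
    (h : 1 < 2 / (2 - q) * (2 * (1 - q)) ^ ((1 - q) / (2 - q)) * q ^ (1 / (2 - q))) :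
    2 / 3 < q := by
  by_contra! hle
  have h2q : 0 < 2 - q := by linarith
  have hamgm := geom_mean_le_arith_mean2_weighted (w₁ := (1 - q) / (2 - q)) (w₂ := 1 / (2 - q))
    (div_nonneg (by linarith) h2q.le) (by positivity) (by linarith : 0 ≤ 2 * (1 - q)) hq0.le
    (by field_simp; ring)
  have hbound : 2 / (2 - q) * ((1 - q) / (2 - q) * (2 * (1 - q)) + 1 / (2 - q) * q) ≤ 1 := by
    field_simp
    nlinarith
  rw [mul_assoc] at h
  nlinarith [mul_le_mul_of_nonneg_left hamgm (by positivity : 0 ≤ 2 / (2 - q))]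

lemma F_one_half_le_of_abs_eq_two {q c : ℝ} (hq : 2 / 3 ≤ q) (hc : |c| = 2) (y : ℝ) :
    F 1 q c (c / 2) ≤ F 1 q c y := by
  have hq0 : 0 < q := by linarith
  have hdist : (2 - |y|) ^ 2 ≤ (c - y) ^ 2 :=
    sq_le_sq.2 (by rw [← hc]; exact abs_abs_sub_abs_le_abs_sub c y)
  have hval : F 1 q c (c / 2) = 1 / 2 + 1 / q := by
    rw [F, abs_div, hc, abs_two, div_self two_ne_zero, one_rpow, one_rpow]
    nlinarith [sq_abs c]
  calc F 1 q c (c / 2) = 1 / 2 + 1 / q := hval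
    _ ≤ 1 / 2 * (2 - |y|) ^ 2 + |y| ^ q / q :=
      half_add_inv_le_of_two_thirds_le hq (abs_nonneg y)
    _ ≤ F 1 q c y := by
      rw [F, one_rpow, one_div_mul_eq_div q]
      linarith

theorem h_at_half_b_general (b q : ℝ) (hb : b ≠ 0) (hq0 : 0 < q)
    (hcase : 1 < q ∨
      (q ≤ 1 ∧ 1 < (2 / (2 - q)) * (2 * (1 - q)) ^ ((1 - q) / (2 - q)) * q ^ (1 / (2 - q)))) :
    ∀ β : ℝ, F (|b| / 2) q b (b / 2) ≤ F (|b| / 2) q b β := by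
  have hq : 2 / 3 ≤ q := by
    rcases hcase with hq1 | ⟨-, h⟩
    · linarith
    · exact (two_thirds_lt_of_one_lt hq0 h).le
  have hω : 0 < |b| / 2 := by positivity
  have hc : |b / (|b| / 2)| = 2 := by
    rw [abs_div, abs_of_pos hω]
    field_simp [abs_ne_zero.2 hb]
  intro β
  rw [F_eq_sq_mul_F_one hω, F_eq_sq_mul_F_one hω, div_right_comm]
  exact mul_le_mul_of_nonneg_left (F_one_half_le_of_abs_eq_two hq hc _) (sq_nonneg _)

/-- For `b ≠ 0` and `q` with either `1 < q ≤ 2`, or `0 < q ≤ 1` together with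
`(2/(2−q))·(2(1−q))^((1−q)/(2−q))·q^(1/(2−q)) > 1`, the point `b/2` is a global
minimizer of `F (|b|/2) q b`; that is, `h(ω = |b|/2, q; b) = b/2`. -/
theorem h_at_half_b (b q : ℝ) (hb : b ≠ 0) (hq0 : 0 < q) (hq2 : q ≤ 2)
    (hcase : 1 < q ∨
      (q ≤ 1 ∧ 1 < (2 / (2 - q)) * (2 * (1 - q)) ^ ((1 - q) / (2 - q)) * q ^ (1 / (2 - q)))) :
    ∀ β : ℝ, F (|b| / 2) q b (b / 2) ≤ F (|b| / 2) q b β :=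
  h_at_half_b_general b q hb hq0 hcase
end

section
/- Let b ∈ ℝ with b ≠ 0 and let 0 < q < 2. If φ > 0 satisfies the stationarity equation φ + (|b|/2)·(φ/(|b|/2))^(q−1) = |b|, then φ ≤ |b|/2. (That is, |b|/2 is the largest positive solution of the stationarity equation when ω = |b|/2, and it is always a solution.) -/
/-!
Put `ω = |b|/2` and `t = φ/ω`, so the equation reads `ω (t + t^(q-1)) = 2ω`. If `t > 1` then
`t^(q-1) ≥ t⁻¹` because `q - 1 ≥ -1`, and `t + t⁻¹ > 2` for `t > 1`, so the left
side would exceed `2ω`.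
-/

lemma two_lt_add_inv_of_one_lt {t : ℝ} (ht : 1 < t) : 2 < t + t⁻¹ := by
  have ht0 : 0 < t := one_pos.trans ht
  have key : 2 * t < t * t + 1 := by nlinarith [mul_pos (sub_pos.2 ht) (sub_pos.2 ht)]
  calc 2 = 2 * t * t⁻¹ := by field_simp
    _ < (t * t + 1) * t⁻¹ := by gcongr
    _ = t + t⁻¹ := by field_simp

lemma inv_le_rpow_sub_one {t q : ℝ} (ht : 1 ≤ t) (hq : 0 ≤ q) : t⁻¹ ≤ t ^ (q - 1) := by
  rw [← Real.rpow_neg_one]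
  exact Real.rpow_le_rpow_of_exponent_le ht (by linarith)

lemma two_mul_lt_add_mul_rpow_div {ω q φ : ℝ} (hω : 0 < ω) (hq : 0 ≤ q) (hφ : ω < φ) :
    2 * ω < φ + ω * (φ / ω) ^ (q - 1) := by
  set t := φ / ω
  have ht : 1 < t := (one_lt_div hω).2 hφ
  have hφt : φ = ω * t := (mul_div_cancel₀ φ hω.ne').symm
  calc 2 * ω < ω * (t + t⁻¹) := by nlinarith [two_lt_add_inv_of_one_lt ht]
    _ ≤ ω * (t + t ^ (q - 1)) := by gcongr; exact inv_le_rpow_sub_one ht.le hq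
    _ = φ + ω * t ^ (q - 1) := by rw [hφt]; ring

theorem stationary_le_half_b_general (b q φ : ℝ) (hb : b ≠ 0) (hq0 : 0 < q)
    (heq : φ + (|b| / 2) * (φ / (|b| / 2)) ^ (q - 1) = |b|) :
    φ ≤ |b| / 2 := by
  have hω : 0 < |b| / 2 := half_pos (abs_pos.2 hb)
  by_contra! h
  have := two_mul_lt_add_mul_rpow_div hω hq0.le h
  linarith

/-- For `b ≠ 0` and `0 < q < 2`: if `φ > 0` satisfies the stationarity equation
`φ + (|b|/2)·(φ/(|b|/2))^(q−1) = |b|`, then `φ ≤ |b|/2`. Powers are real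
powers (`rpow`). -/
theorem stationary_le_half_b (b q φ : ℝ) (hb : b ≠ 0) (hq0 : 0 < q) (hq2 : q < 2)
    (hφ : 0 < φ)
    (heq : φ + (|b| / 2) * (φ / (|b| / 2)) ^ (q - 1) = |b|) :
    φ ≤ |b| / 2 :=
  stationary_le_half_b_general b q φ hb hq0 heq
end

section
/- Fix 0 < q < 2 and b ∈ ℝ. Suppose 0 < ω' < ω, h is a global minimizer of F(ω, q, b), and h' is a global minimizer of F(ω', q, b). Then |h'| ≥ |h|. In particular, if h ≠ 0, then |h'| ≥ |h| > 0: nonzero values of the mode-thresholding function are nondecreasing as ω decreases, for fixed q. -/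
/-- For fixed `0 < q < 2` and `b`: if `0 < ω' < ω`, `h` is a global minimizer of
`F ω q b`, and `h'` is a global minimizer of `F ω' q b`, then `|h'| ≥ |h|`. -/
theorem magnitude_nested_in_omega (q b : ℝ) (hq0 : 0 < q) (hq2 : q < 2)
    (ω ω' h h' : ℝ) (hω' : 0 < ω') (hω'ω : ω' < ω)
    (hmin : ∀ β : ℝ, F ω q b h ≤ F ω q b β)
    (hmin' : ∀ β : ℝ, F ω' q b h' ≤ F ω' q b β) :
    |h| ≤ |h'| := by
  have hA := hmin h'
  have hB := hmin' h
  unfold F at hA hB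
  have hc : ω' ^ (2 - q) < ω ^ (2 - q) :=
    Real.rpow_lt_rpow hω'.le hω'ω (by linarith)
  have hcq : ω' ^ (2 - q) / q < ω ^ (2 - q) / q :=
    (div_lt_div_iff_of_pos_right hq0).mpr hc
  by_contra hlt
  push_neg at hlt
  have hp : |h'| ^ q < |h| ^ q :=
    Real.rpow_lt_rpow (abs_nonneg _) hlt hq0
  nlinarith [mul_pos (sub_pos.2 hcq) (sub_pos.2 hp)]
end

section
/- For every real q with 0 < q < 1, one has q·log(2) + q·log(1 − q) + q − q·log(q) − 2 < 0. (This quantity is the numerator determining the sign of ∂α(ω, q)/∂q, so its negativity implies α(ω, q) is decreasing in q.) -/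
/-- For every real `q` with `0 < q < 1`,
`q·log 2 + q·log(1 − q) + q − q·log q − 2 < 0`, where `log` is the natural
logarithm. -/
theorem numerator_neg (q : ℝ) (hq0 : 0 < q) (hq1 : q < 1) :
    q * Real.log 2 + q * Real.log (1 - q) + q - q * Real.log q - 2 < 0 := by
  have h1q : (0:ℝ) < 1 - q := by linarith
  have hpos : (0:ℝ) < 2 * (1 - q) / q := by positivity
  have h1 : Real.log (2 * (1 - q) / q) ≤ 2 * (1 - q) / q - 1 :=
    Real.log_le_sub_one_of_pos hpos
  have hlog : Real.log (2 * (1 - q) / q)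
      = Real.log 2 + Real.log (1 - q) - Real.log q := by
    rw [Real.log_div (by positivity) hq0.ne', Real.log_mul (by norm_num) h1q.ne']
  rw [hlog] at h1
  have h2 : q * (Real.log 2 + Real.log (1 - q) - Real.log q) ≤ 2 * (1 - q) - q := by
    have := mul_le_mul_of_nonneg_left h1 hq0.le
    have hq : q * (2 * (1 - q) / q) = 2 * (1 - q) := by field_simp
    nlinarith [this]
  nlinarith [h2]
end

section
/- Fix ω > 0 and b ∈ ℝ. If 0 is a global minimizer of F(ω, q, b) for some 0 < q ≤ 1, and 0 < q' < q, then 0 is a global minimizer of F(ω, q', b). (Sparsity of the mode-thresholding function is nested in q for fixed ω: h(ω, q; b) = 0 and q' < q ≤ 1 imply h(ω, q'; b) = 0.) -/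
open Real

lemma bernoulli_neg {s p : ℝ} (hs : 0 ≤ s) (hp0 : p ≤ 0) (hp1 : -1 ≤ p) :
    1 + p * s ≤ (1 + s) ^ p := by
  have h1s : (0:ℝ) < 1 + s := by linarith
  rcases le_or_gt (1 + p * s) 0 with h | h
  · exact h.trans (rpow_pos_of_pos h1s p).le
  · have hb : (1 + s) ^ (-p) ≤ 1 + (-p) * s :=
      rpow_one_add_le_one_add_mul_self (by linarith) (by linarith) (by linarith)
    have key : (1 + p * s) * (1 + s) ^ (-p) ≤ 1 := by
      calc (1 + p * s) * (1 + s) ^ (-p) ≤ (1 + p * s) * (1 + (-p) * s) :=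
            mul_le_mul_of_nonneg_left hb h.le
        _ = 1 - (p*s)^2 := by ring
        _ ≤ 1 := by nlinarith [sq_nonneg (p*s)]
    have h2 : (1 + s) ^ (-p) = ((1 + s) ^ p)⁻¹ := rpow_neg h1s.le p
    have hp3 : 0 < (1 + s) ^ p := rpow_pos_of_pos h1s p
    rw [h2, ← div_eq_mul_inv, div_le_one hp3] at key
    exact key

lemma logW {q q' : ℝ} (hq'0 : 0 < q') (hq'q : q' < q) (hq1 : q ≤ 1) :
    (q - q') * Real.log (2*(1-q')/q') ≤ (2 - q') * Real.log (q/q') := by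
  have hq0 : 0 < q := hq'0.trans hq'q
  have hq'1 : q' < 1 := lt_of_lt_of_le hq'q hq1
  have hqq' : 0 < q - q' := by linarith
  -- log(q/q') ≥ (q-q')/q
  have hlogr : (q - q')/q ≤ Real.log (q/q') := by
    have h1 : Real.log (q'/q) ≤ q'/q - 1 := log_le_sub_one_of_pos (by positivity)
    have h2 : Real.log (q'/q) = - Real.log (q/q') := by
      rw [← log_inv]
      congr 1
      field_simp
    rw [h2] at h1
    have : (q-q')/q = 1 - q'/q := by field_simp
    linarith
  set L := Real.log (2*(1-q')/q') with hL
  rcases le_or_gt L ((2-q')/q) with hc | hc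
  · -- case (i)
    calc (q - q') * L ≤ (q - q') * ((2-q')/q) := mul_le_mul_of_nonneg_left hc hqq'.le
      _ = (2 - q') * ((q-q')/q) := by ring
      _ ≤ (2 - q') * Real.log (q/q') := mul_le_mul_of_nonneg_left hlogr (by linarith)
  · -- case (ii)
    have hLsplit : L = Real.log 2 + Real.log (1-q') - Real.log q' := by
      rw [hL, log_div (mul_pos two_pos (by linarith : (0:ℝ) < 1 - q')).ne' hq'0.ne', log_mul (two_ne_zero) (by linarith : (1:ℝ) - q' ≠ 0)]
    have hlog1q' : Real.log (1-q') ≤ 0 := log_nonpos (by linarith) (by linarith)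
    have hnlq' : (2-q')/q - Real.log 2 < - Real.log q' := by
      have : L ≤ Real.log 2 - Real.log q' := by rw [hLsplit]; linarith
      linarith
    have hlogq : 1 - 1/q ≤ Real.log q := by
      have h1 : Real.log (1/q) ≤ 1/q - 1 := log_le_sub_one_of_pos (by positivity)
      rw [log_div one_ne_zero hq0.ne', log_one] at h1
      linarith
    have hlogqq' : Real.log (q/q') = Real.log q - Real.log q' := log_div hq0.ne' hq'0.ne'
    -- (2-q')*log(q/q') - (q-q')*L ≥ (2-q')*(1/q - log 2) ≥ 0
    have hlog2 : Real.log 2 ≤ 1 := by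
      have := log_le_sub_one_of_pos (show (0:ℝ) < 2 by norm_num); linarith
    have h2q' : (0:ℝ) < 2 - q' := by linarith
    have h2q : (0:ℝ) < 2 - q := by linarith
    have e1 : (2 - q') * Real.log (q/q') - (q - q') * L
        = (2-q') * Real.log q + (2-q) * (- Real.log q') - (q-q') * (Real.log 2 + Real.log (1-q')) := by
      rw [hlogqq', hLsplit]; ring
    have b1 : (2-q') * (1 - 1/q) ≤ (2-q') * Real.log q :=
      mul_le_mul_of_nonneg_left hlogq h2q'.le
    have b2 : (2-q) * ((2-q')/q - Real.log 2) ≤ (2-q) * (- Real.log q') :=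
      mul_le_mul_of_nonneg_left hnlq'.le h2q.le
    have b3 : (q-q') * (Real.log 2 + Real.log (1-q')) ≤ (q-q') * Real.log 2 :=
      mul_le_mul_of_nonneg_left (by linarith) hqq'.le
    have hfin : 0 ≤ (2-q') * (1 - 1/q) + (2-q) * ((2-q')/q - Real.log 2) - (q-q') * Real.log 2 := by
      have heq : (2-q') * (1 - 1/q) + (2-q) * ((2-q')/q - Real.log 2) - (q-q') * Real.log 2
          = (2-q') * (1/q - Real.log 2) := by field_simp; ring
      rw [heq]
      have : Real.log 2 ≤ 1/q := by
        have : (1:ℝ) ≤ 1/q := by rw [le_div_iff₀ hq0]; linarith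
        linarith
      have := sub_nonneg.mpr this
      positivity
    linarith

/-- expansion of log of penalty coefficient times power -/
lemma log_pen {ω p t : ℝ} (hω : 0 < ω) (hp : 0 < p) (ht : 0 < t) (e : ℝ) :
    Real.log ((ω ^ (2-p) / p) * t ^ e)
      = (2-p) * Real.log ω - Real.log p + e * Real.log t := by
  rw [log_mul (div_pos (rpow_pos_of_pos hω _) hp).ne' (rpow_pos_of_pos ht _).ne',
    log_div (rpow_pos_of_pos hω _).ne' hp.ne', log_rpow hω, log_rpow ht]

/-- Sparsity of the mode-thresholding function is nested in q for fixed ω: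
if 0 is a global minimizer of `F ω q b` for some `0 < q ≤ 1` and `0 < q' < q`,
then 0 is a global minimizer of `F ω q' b`. -/
theorem sparsity_nested_in_q (ω b : ℝ) (hω : 0 < ω) (q q' : ℝ)
    (hq'0 : 0 < q') (hq'q : q' < q) (hq1 : q ≤ 1)
    (h0 : ∀ β : ℝ, F ω q b 0 ≤ F ω q b β) :
    ∀ β : ℝ, F ω q' b 0 ≤ F ω q' b β := by
  have hq0 : 0 < q := hq'0.trans hq'q
  have hq'1 : q' < 1 := lt_of_lt_of_le hq'q hq1
  have hqq' : 0 < q - q' := by linarith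
  intro β
  by_cases hβ0 : β = 0
  · subst hβ0; exact le_refl _
  simp only [F, abs_zero, sub_zero] at h0 ⊢
  rw [zero_rpow hq'0.ne', mul_zero, add_zero]
  have h0' : ∀ x : ℝ, 1/2 * b^2 ≤ 1/2 * (b - x)^2 + ω ^ (2-q)/q * |x| ^ q := by
    intro x
    have h := h0 x
    rwa [zero_rpow hq0.ne', mul_zero, add_zero] at h
  set t := |β| with ht_def
  have ht : 0 < t := abs_pos.mpr hβ0
  set c' : ℝ := ω ^ (2-q') / q' with hc'_def
  set cq : ℝ := ω ^ (2-q) / q with hcq_def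
  have hc' : 0 < c' := div_pos (rpow_pos_of_pos hω _) hq'0
  have hcq : 0 < cq := div_pos (rpow_pos_of_pos hω _) hq0
  -- the linear-form hypothesis
  have hB' : ∀ s : ℝ, 0 < s → |b| ≤ s/2 + cq * s^(q-1) := by
    intro s hs
    have hsq : s ^ q = s^(q-1) * s := by
      rw [← rpow_add_one hs.ne' (q-1)]; norm_num
    rcases le_or_gt 0 b with hb | hb
    · have h := h0' s
      rw [abs_of_pos hs, hsq] at h
      rw [abs_of_nonneg hb]
      nlinarith [h, mul_pos hcq hs]
    · have h := h0' (-s)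
      rw [abs_neg, abs_of_pos hs, hsq] at h
      rw [abs_of_neg hb]
      nlinarith [h, mul_pos hcq hs]
  -- reduce goal to linear form
  suffices hKey : |b| ≤ t/2 + c' * t^(q'-1) by
    have htq : t ^ q' = t^(q'-1) * t := by
      rw [← rpow_add_one ht.ne' (q'-1)]; norm_num
    have hbb : b * β ≤ |b| * t := by
      calc b * β ≤ |b * β| := le_abs_self _
        _ = |b| * t := abs_mul b β
    have hβsq : β^2 = t^2 := (sq_abs β).symm
    have hmul := mul_le_mul_of_nonneg_right hKey ht.le
    rw [htq]
    nlinarith [hmul, hbb, hβsq]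
  rcases le_or_gt (cq * t^(q-1)) (c' * t^(q'-1)) with hcase | hlt
  · -- Case A
    have := hB' t ht
    linarith
  · -- Case B
    set s₀ : ℝ := Real.exp (Real.log ω + Real.log (q/q')/(q-q')) with hs₀_def
    have hs₀ : 0 < s₀ := exp_pos _
    have hlog_s₀ : Real.log s₀ = Real.log ω + Real.log (q/q')/(q-q') := log_exp _
    have hR : Real.log (q/q') = Real.log q - Real.log q' := log_div hq0.ne' hq'0.ne'
    have hlogs₀' : (q-q') * Real.log s₀ = (q-q') * Real.log ω + (Real.log q - Real.log q') := by
      rw [hlog_s₀, ← hR]; field_simp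
    -- s₀ < t
    have hts₀ : s₀ < t := by
      have h1 : Real.log (c' * t^(q'-1)) < Real.log (cq * t^(q-1)) :=
        log_lt_log (mul_pos hc' (rpow_pos_of_pos ht _)) hlt
      rw [hc'_def, hcq_def, log_pen hω hq'0 ht, log_pen hω hq0 ht] at h1
      have h2 : Real.log s₀ < Real.log t := by
        have h3' : (q-q') * Real.log s₀ < (q-q') * Real.log t := by
          nlinarith [h1, hlogs₀']
        exact lt_of_mul_lt_mul_left h3' hqq'.le
      calc s₀ = Real.exp (Real.log s₀) := (exp_log hs₀).symm
        _ < Real.exp (Real.log t) := exp_lt_exp.mpr h2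
        _ = t := exp_log ht
    -- penalties coincide at s₀
    have heq : cq * s₀^(q-1) = c' * s₀^(q'-1) := by
      have hl : Real.log (cq * s₀^(q-1)) = Real.log (c' * s₀^(q'-1)) := by
        rw [hc'_def, hcq_def, log_pen hω hq'0 hs₀, log_pen hω hq0 hs₀]
        linarith [hlogs₀']
      calc cq * s₀^(q-1) = Real.exp (Real.log (cq * s₀^(q-1))) :=
            (exp_log (mul_pos hcq (rpow_pos_of_pos hs₀ _))).symm
        _ = Real.exp (Real.log (c' * s₀^(q'-1))) := by rw [hl]
        _ = c' * s₀^(q'-1) := exp_log (mul_pos hc' (rpow_pos_of_pos hs₀ _))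
    -- claim 3 : derivative bound
    have h3 : c' * ((1-q') * s₀^(q'-2)) ≤ 1/2 := by
      have hW := logW hq'0 hq'q hq1
      have hL : Real.log (2*(1-q')/q') = Real.log 2 + Real.log (1-q') - Real.log q' := by
        rw [log_div (mul_pos two_pos (by linarith : (0:ℝ) < 1 - q')).ne' hq'0.ne',
          log_mul two_ne_zero (by linarith : (1:ℝ) - q' ≠ 0)]
      have hpos : 0 < c' * ((1-q') * s₀^(q'-2)) :=
        mul_pos hc' (mul_pos (by linarith) (rpow_pos_of_pos hs₀ _))
      have hlhalf : Real.log (c' * ((1-q') * s₀^(q'-2))) ≤ Real.log (1/2) := by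
        rw [hc'_def, ← mul_assoc, mul_comm (ω ^ (2-q') / q') (1-q'), mul_assoc]
        rw [log_mul (by linarith : (1:ℝ) - q' ≠ 0)
          (mul_pos hc' (rpow_pos_of_pos hs₀ _)).ne', log_pen hω hq'0 hs₀]
        rw [show (1:ℝ)/2 = 2⁻¹ by norm_num, log_inv]
        -- goal : log(1-q') + ((2-q')*log ω - log q' + (q'-2)*log s₀) ≤ -log 2
        rw [hL, hR] at hW
        -- hW : (q-q') * (log 2 + log(1-q') - log q') ≤ (2-q') * (log q - log q')
        have h5 : (q'-2)*((q-q') * Real.log s₀)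
            = (q'-2)*((q-q') * Real.log ω + (Real.log q - Real.log q')) := by
          rw [hlogs₀']
        have hGmul : (q-q') * (Real.log (1-q')
              + ((2-q') * Real.log ω - Real.log q' + (q'-2) * Real.log s₀))
            ≤ (q-q') * (-Real.log 2) := by nlinarith [hW, h5]
        have hG := le_of_mul_le_mul_left hGmul hqq'
        linarith [hG]
      have := exp_le_exp.mpr hlhalf
      rwa [exp_log hpos, exp_log (by norm_num : (0:ℝ) < 1/2)] at this
    -- monotonicity from s₀ to t
    have hmono : s₀/2 + c' * s₀^(q'-1) ≤ t/2 + c' * t^(q'-1) := by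
      set u : ℝ := t/s₀ - 1 with hu_def
      have hu : 0 ≤ u := by
        rw [hu_def, sub_nonneg, le_div_iff₀ hs₀]; linarith
      have hbern := bernoulli_neg hu (by linarith : q' - 1 ≤ 0) (by linarith : (-1:ℝ) ≤ q' - 1)
      have h1u : 1 + u = t/s₀ := by rw [hu_def]; ring
      rw [h1u, div_rpow ht.le hs₀.le] at hbern
      -- hbern : 1 + (q'-1)*u ≤ t^(q'-1)/s₀^(q'-1)
      have hs₀p : 0 < s₀^(q'-1) := rpow_pos_of_pos hs₀ _
      have hmul := mul_le_mul_of_nonneg_right hbern hs₀p.le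
      rw [div_mul_cancel₀ _ hs₀p.ne'] at hmul
      -- hmul : (1 + (q'-1)*u) * s₀^(q'-1) ≤ t^(q'-1)
      have hspow : s₀^(q'-1) = s₀^(q'-2) * s₀ := by
        rw [← rpow_add_one hs₀.ne' (q'-2)]
        congr 1
        ring
      have husp : u * s₀^(q'-1) = (t - s₀) * s₀^(q'-2) := by
        rw [hu_def, hspow]; field_simp
      -- so : s₀^(q'-1) - (1-q')*(t-s₀)*s₀^(q'-2) ≤ t^(q'-1)
      have hkey2 : s₀^(q'-1) - (1-q')*((t-s₀)*s₀^(q'-2)) ≤ t^(q'-1) := by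
        have h6 : (1-q')*(u * s₀^(q'-1)) = (1-q')*((t - s₀) * s₀^(q'-2)) := by rw [husp]
        linarith [hmul, h6]
      have hc'key := mul_le_mul_of_nonneg_left hkey2 hc'.le
      -- c' * s₀^(q'-1) - c'*(1-q')*(t-s₀)*s₀^(q'-2) ≤ c' * t^(q'-1)
      have hlast : c' * ((1-q') * s₀^(q'-2)) * (t - s₀) ≤ 1/2 * (t - s₀) :=
        mul_le_mul_of_nonneg_right h3 (by linarith)
      linarith [hc'key, hlast]
    calc |b| ≤ s₀/2 + cq * s₀^(q-1) := hB' s₀ hs₀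
      _ = s₀/2 + c' * s₀^(q'-1) := by rw [heq]
      _ ≤ t/2 + c' * t^(q'-1) := hmono
end

section
/- Fix ω > 0, b ∈ ℝ, and 0 < q < q' ≤ 2. If h is a global minimizer of F(ω, q, b) and h' is a global minimizer of F(ω, q', b), then (1/q)·|h/ω|^q − (1/q')·|h/ω|^(q') ≤ (1/q)·|h'/ω|^q − (1/q')·|h'/ω|^(q'). -/
/-- For `ω > 0`, `b ∈ ℝ`, and `0 < q < q' ≤ 2`: if `h` is a global minimizer of
`F ω q b` and `h'` is a global minimizer of `F ω q' b`, then
`(1/q)·|h/ω|^q − (1/q')·|h/ω|^(q') ≤ (1/q)·|h'/ω|^q − (1/q')·|h'/ω|^(q')`. -/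
theorem combined_optimality_ineq (ω b q q' h h' : ℝ) (hω : 0 < ω)
    (hq0 : 0 < q) (hqq' : q < q') (hq'2 : q' ≤ 2)
    (hmin : ∀ β : ℝ, F ω q b h ≤ F ω q b β)
    (hmin' : ∀ β : ℝ, F ω q' b h' ≤ F ω q' b β) :
    (1 / q) * |h / ω| ^ q - (1 / q') * |h / ω| ^ q' ≤
      (1 / q) * |h' / ω| ^ q - (1 / q') * |h' / ω| ^ q' := by
  have hq'0 : 0 < q' := lt_trans hq0 hqq'
  have hωq : (0:ℝ) < ω ^ q := Real.rpow_pos_of_pos hω q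
  have hωq' : (0:ℝ) < ω ^ q' := Real.rpow_pos_of_pos hω q'
  have hω2 : (0:ℝ) < ω ^ (2:ℕ) := by positivity
  have A := hmin h'
  have B := hmin' h
  unfold F at A B
  have e2 : ω ^ (2 - q) * ω ^ q = ω ^ (2:ℕ) := by
    rw [← Real.rpow_natCast ω 2, ← Real.rpow_add hω]; norm_num
  have e2' : ω ^ (2 - q') * ω ^ q' = ω ^ (2:ℕ) := by
    rw [← Real.rpow_natCast ω 2, ← Real.rpow_add hω]; norm_num
  have f1 : ω ^ (2 - q) = ω ^ (2:ℕ) / ω ^ q := by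
    rw [eq_div_iff hωq.ne']; exact e2
  have f2 : ω ^ (2 - q') = ω ^ (2:ℕ) / ω ^ q' := by
    rw [eq_div_iff hωq'.ne']; exact e2'
  have K : ω ^ (2 - q) / q * |h| ^ q + ω ^ (2 - q') / q' * |h'| ^ q'
      ≤ ω ^ (2 - q) / q * |h'| ^ q + ω ^ (2 - q') / q' * |h| ^ q' := by
    nlinarith [A, B]
  rw [f1, f2] at K
  have h1 : |h / ω| ^ q = |h| ^ q / ω ^ q := by
    rw [abs_div, abs_of_pos hω, Real.div_rpow (abs_nonneg h) hω.le]
  have h2 : |h' / ω| ^ q = |h'| ^ q / ω ^ q := by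
    rw [abs_div, abs_of_pos hω, Real.div_rpow (abs_nonneg h') hω.le]
  have h3 : |h / ω| ^ q' = |h| ^ q' / ω ^ q' := by
    rw [abs_div, abs_of_pos hω, Real.div_rpow (abs_nonneg h) hω.le]
  have h4 : |h' / ω| ^ q' = |h'| ^ q' / ω ^ q' := by
    rw [abs_div, abs_of_pos hω, Real.div_rpow (abs_nonneg h') hω.le]
  rw [h1, h2, h3, h4]
  have K3 : ω ^ (2:ℕ) * ((1 / q) * (|h| ^ q / ω ^ q) - (1 / q') * (|h| ^ q' / ω ^ q'))
      ≤ ω ^ (2:ℕ) * ((1 / q) * (|h'| ^ q / ω ^ q) - (1 / q') * (|h'| ^ q' / ω ^ q')) := by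
    have eL : ω ^ (2:ℕ) * ((1 / q) * (|h| ^ q / ω ^ q) - (1 / q') * (|h| ^ q' / ω ^ q'))
        = ω ^ (2:ℕ) / ω ^ q / q * |h| ^ q - ω ^ (2:ℕ) / ω ^ q' / q' * |h| ^ q' := by
      field_simp
    have eR : ω ^ (2:ℕ) * ((1 / q) * (|h'| ^ q / ω ^ q) - (1 / q') * (|h'| ^ q' / ω ^ q'))
        = ω ^ (2:ℕ) / ω ^ q / q * |h'| ^ q - ω ^ (2:ℕ) / ω ^ q' / q' * |h'| ^ q' := by
      field_simp
    rw [eL, eR]; linarith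
  exact le_of_mul_le_mul_left K3 hω2
end

section
/- Fix 0 < q ≤ 2 and b ∈ ℝ with b ≠ 0, and let 0 < ω ≤ |b|/2. If h is a global minimizer of F(ω, q, b) with h ≠ 0, then |h| ≥ |b|/2. -/
private lemma F_neg (ω q b β : ℝ) : F ω q (-b) (-β) = F ω q b β := by
  simp only [F, abs_neg]
  ring_nf

set_option maxHeartbeats 1600000 in
private lemma pos_case (q b ω h : ℝ) (hq0 : 0 < q) (hq2 : q ≤ 2)
    (hb : 0 < b) (hω : 0 < ω) (hωb : ω ≤ b / 2)
    (hmin : ∀ β : ℝ, F ω q b h ≤ F ω q b β) (hne : h ≠ 0) :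
    b / 2 ≤ h := by
  have hwq : (0:ℝ) < ω ^ (2 - q) := Real.rpow_pos_of_pos hω _
  have hc : (0:ℝ) < ω ^ (2 - q) / q := div_pos hwq hq0
  -- F h ≤ F 0
  have h0 := hmin 0
  rw [show F ω q b 0 = (1/2) * b ^ 2 by
        simp [F, Real.zero_rpow hq0.ne']] at h0
  have hFh : F ω q b h = (1/2) * (b - h)^2 + (ω ^ (2 - q) / q) * |h| ^ q := rfl
  have habs : (0:ℝ) < (ω ^ (2 - q) / q) * |h| ^ q :=
    mul_pos hc (Real.rpow_pos_of_pos (abs_pos.mpr hne) _)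
  -- h > 0
  have hh0 : 0 < h := by
    rw [hFh] at h0
    by_contra hle
    push_neg at hle
    nlinarith [sq_nonneg h]
  have habsh : |h| = h := abs_of_pos hh0
  -- stationarity
  have hder : HasDerivAt (F ω q b)
      ((h - b) + (ω ^ (2 - q) / q) * (q * h ^ (q - 1))) h := by
    have h1 : HasDerivAt (fun β : ℝ => (1/2) * (b - β)^2 + (ω ^ (2 - q) / q) * β ^ q)
        ((h - b) + (ω ^ (2 - q) / q) * (q * h ^ (q - 1))) h := by
      have hA : HasDerivAt (fun β : ℝ => (1/2) * (b - β)^2) (h - b) h := by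
        have : HasDerivAt (fun β : ℝ => (1/2) * (b - β)^2)
            ((1/2) * (2 * (b - h) ^ 1 * (0 - 1))) h := by
          exact (((hasDerivAt_const h b).sub (hasDerivAt_id h)).pow 2).const_mul (1/2)
        convert this using 1; ring
      have hB : HasDerivAt (fun β : ℝ => (ω ^ (2 - q) / q) * β ^ q)
          ((ω ^ (2 - q) / q) * (q * h ^ (q - 1))) h :=
        (Real.hasDerivAt_rpow_const (Or.inl hne)).const_mul _
      exact hA.add hB
    apply h1.congr_of_eventuallyEq
    filter_upwards [eventually_gt_nhds hh0] with x hx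
    simp [F, abs_of_pos hx]
  have hstat : (h - b) + (ω ^ (2 - q) / q) * (q * h ^ (q - 1)) = 0 :=
    IsLocalMin.hasDerivAt_eq_zero (Filter.Eventually.of_forall hmin) hder
  set A : ℝ := ω ^ (2 - q) * h ^ (q - 1) with hA_def
  have hA_pos : 0 < A := mul_pos hwq (Real.rpow_pos_of_pos hh0 _)
  have hbA : b = h + A := by
    have : (ω ^ (2 - q) / q) * (q * h ^ (q - 1)) = A := by
      field_simp [hA_def]
      ring
    rw [this] at hstat; linarith
  -- F h ≤ F 0 rewritten
  have hq_split : h ^ q = h ^ (q - 1) * h := by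
    rw [← Real.rpow_add_one hh0.ne' (q-1)]; norm_num
  have hF0' : (1/2) * A^2 + (ω ^ (2 - q) / q) * (h ^ (q-1) * h) ≤ (1/2) * (h + A)^2 := by
    rw [hFh, habsh, hq_split] at h0
    rw [← hbA]
    convert h0 using 3
    rw [hbA]; ring
  have hCineq : 2 * (1 - q) * A ≤ q * h := by
    have hexp : (ω ^ (2 - q) / q) * (h ^ (q-1) * h) = A * h / q := by
      rw [hA_def]; ring
    rw [hexp] at hF0'
    have h2 : A * h / q ≤ (1/2) * h^2 + h * A := by nlinarith
    have h3 : A * h ≤ q * ((1/2) * h^2 + h * A) := by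
      rw [div_le_iff₀ hq0] at h2; linarith [h2]
    have h4 : 2 * A ≤ q * h + 2 * q * A := by
      have := mul_pos hh0 hh0
      nlinarith
    linarith
  -- suffices A ≤ h
  have key : A ≤ h := by
    rcases le_or_gt ω h with hωh | hωh
    · -- ω ≤ h : A = ω^(2-q) h^(q-1) ≤ h^(2-q) h^(q-1) = h
      have h1 : ω ^ (2-q) ≤ h ^ (2-q) :=
        Real.rpow_le_rpow hω.le hωh (by linarith)
      have h2 : A ≤ h ^ (2-q) * h ^ (q-1) :=
        mul_le_mul_of_nonneg_right h1 (Real.rpow_pos_of_pos hh0 _).le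
      rwa [← Real.rpow_add hh0, show (2-q) + (q-1) = 1 by ring, Real.rpow_one] at h2
    rcases le_or_gt 1 q with hq1 | hq1
    · -- 1 ≤ q, h < ω : A ≤ ω^(2-q) ω^(q-1) = ω ≤ b/2
      have h1 : h ^ (q-1) ≤ ω ^ (q-1) :=
        Real.rpow_le_rpow hh0.le hωh.le (by linarith)
      have h2 : A ≤ ω ^ (2-q) * ω ^ (q-1) :=
        mul_le_mul_of_nonneg_left h1 hwq.le
      rw [← Real.rpow_add hω, show (2-q) + (q-1) = 1 by ring, Real.rpow_one] at h2
      have : 2 * ω ≤ h + A := by rw [← hbA]; linarith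
      linarith
    · -- q < 1, h < ω : contradiction
      exfalso
      set s : ℝ := ω / h with hs_def
      have hs1 : 1 < s := (one_lt_div hh0).mpr hωh
      have hs0 : 0 < s := lt_trans zero_lt_one hs1
      have hωeq : s * h = ω := div_mul_cancel₀ ω hh0.ne'
      set u : ℝ := s ^ (2-q) with hu_def
      have hu_eq : A = u * h := by
        have e1 : h ^ (q-1) * h ^ (2-q) = h := by
          rw [← Real.rpow_add hh0]; norm_num
        have e2 : (0:ℝ) < h ^ (2-q) := Real.rpow_pos_of_pos hh0 _
        rw [hu_def, hs_def, Real.div_rpow hω.le hh0.le, div_mul_eq_mul_div,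
          eq_div_iff e2.ne', hA_def, mul_assoc, e1]
      have hu_split : u = s * s ^ (1-q) := by
        rw [hu_def, show (2:ℝ)-q = 1 + (1-q) by ring, Real.rpow_add hs0, Real.rpow_one]
      -- Bernoulli: s^(1-q) ≤ 1 + (1-q)(s-1)
      have hbern : s ^ (1-q) ≤ 1 + (1-q) * (s-1) := by
        have := rpow_one_add_le_one_add_mul_self (s := s - 1) (by linarith)
          (p := 1-q) (by linarith) (by linarith)
        rwa [show 1 + (s - 1) = s by ring] at this
      -- 2ω ≤ b = h + A  ⇒  2s ≤ 1 + u
      have h2s : 2 * s ≤ 1 + u := by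
        have h1 : 2 * ω ≤ h + A := by rw [← hbA]; linarith
        rw [← hωeq, hu_eq] at h1
        have h2 : (2 * s) * h ≤ (1 + u) * h := by linarith
        exact le_of_mul_le_mul_right h2 hh0
      -- hCineq ⇒ 2(1-q)u ≤ q
      have hui : 2 * (1 - q) * u ≤ q := by
        rw [hu_eq] at hCineq
        have h2 : (2 * (1-q) * u) * h ≤ q * h := by linarith
        exact le_of_mul_le_mul_right h2 hh0
      clear_value s u A
      clear hder hmin hstat hFh h0 hF0' habs hc hwq hA_def hq_split hu_def hs_def hωeq hu_eq hbA hA_pos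
      -- derive 1 ≤ (1-q) s
      have hsge : 1 ≤ (1-q) * s := by
        by_contra hcon
        push_neg at hcon
        have hbs : s * s ^ (1-q) ≤ s * (1 + (1-q) * (s-1)) :=
          mul_le_mul_of_nonneg_left hbern hs0.le
        nlinarith [mul_pos (sub_pos.mpr hs1) (sub_pos.mpr hcon)]
      -- final contradiction
      have hu_lb : 2 * s - 1 ≤ u := by linarith
      nlinarith [mul_le_mul_of_nonneg_left hu_lb (by linarith : (0:ℝ) ≤ 1 - q)]
  rw [hbA]; linarith

/-- For `0 < q ≤ 2`, `b ≠ 0`, and `0 < ω ≤ |b|/2`: any nonzero global minimizer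
`h` of `F ω q b` satisfies `|h| ≥ |b|/2`. -/
theorem nonzero_min_ge_half_b (q b ω h : ℝ) (hq0 : 0 < q) (hq2 : q ≤ 2)
    (hb : b ≠ 0) (hω : 0 < ω) (hωb : ω ≤ |b| / 2)
    (hmin : ∀ β : ℝ, F ω q b h ≤ F ω q b β) (hne : h ≠ 0) :
    |b| / 2 ≤ |h| := by
  rcases hb.lt_or_gt with hbneg | hbpos
  · have habs : |b| = -b := abs_of_neg hbneg
    have hmin' : ∀ β : ℝ, F ω q (-b) (-h) ≤ F ω q (-b) β := by
      intro β
      rw [F_neg, show β = -(-β) by ring, F_neg]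
      exact hmin (-β)
    have := pos_case q (-b) ω (-h) hq0 hq2 (by linarith) hω (by rw [habs] at hωb; linarith)
      hmin' (by simpa using hne)
    calc |b|/2 = (-b)/2 := by rw [habs]
    _ ≤ -h := this
    _ ≤ |h| := neg_le_abs h
  · have habs : |b| = b := abs_of_pos hbpos
    have := pos_case q b ω h hq0 hq2 hbpos hω (by rwa [habs] at hωb) hmin hne
    calc |b|/2 = b/2 := by rw [habs]
    _ ≤ h := this
    _ ≤ |h| := le_abs_self h
end

section
/- Fix 0 < q ≤ 2 and b ∈ ℝ, and let ω ≥ |b|/2 with ω > 0. If h is a global minimizer of F(ω, q, b), then |h| ≤ |b|/2. -/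
open Real

theorem hasDerivAt_abs_rpow_of_ne_zero {x : ℝ} (hx : x ≠ 0) (p : ℝ) :
    HasDerivAt (fun y : ℝ ↦ |y| ^ p) (p * |x| ^ (p - 2) * x) x := by
  convert (hasDerivAt_abs hx).rpow_const (p := p) (Or.inl (abs_ne_zero.mpr hx)) using 1
  rw [show p - 1 = p - 2 + 1 by ring, rpow_add_one (abs_ne_zero.mpr hx)]
  linear_combination -(p * |x| ^ (p - 2)) * sign_mul_abs x

theorem hasDerivAt_F {ω q b β : ℝ} (hq : q ≠ 0) (hβ : β ≠ 0) :
    HasDerivAt (F ω q b) (β - b + ω ^ (2 - q) * |β| ^ (q - 2) * β) β := by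
  have hquad := (((hasDerivAt_id β).const_sub b).pow 2).const_mul (1 / 2 : ℝ)
  have hpen := (hasDerivAt_abs_rpow_of_ne_zero hβ q).const_mul (ω ^ (2 - q) / q)
  refine (hquad.add hpen).congr_deriv ?_
  field_simp
  simp only [Nat.cast_ofNat, id_eq, Nat.add_one_sub_one, pow_one]
  ring

theorem mul_one_add_eq_of_forall_F_le {ω q b h : ℝ} (hq : q ≠ 0) (hh : h ≠ 0)
    (hmin : ∀ β, F ω q b h ≤ F ω q b β) :
    h * (1 + ω ^ (2 - q) * |h| ^ (q - 2)) = b := by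
  have hloc : IsLocalMin (F ω q b) h := Filter.Eventually.of_forall hmin
  have := hloc.hasDerivAt_eq_zero (hasDerivAt_F hq hh)
  linarith

theorem abs_eq_of_forall_F_le {ω q b h : ℝ} (hω : 0 ≤ ω) (hq : q ≠ 0) (hh : h ≠ 0)
    (hmin : ∀ β, F ω q b h ≤ F ω q b β) :
    |b| = |h| * (1 + (ω / |h|) ^ (2 - q)) := by
  have hh' : 0 < |h| := abs_pos.mpr hh
  have hfactor : 0 < 1 + ω ^ (2 - q) * |h| ^ (q - 2) := by positivity
  rw [← mul_one_add_eq_of_forall_F_le hq hh hmin, abs_mul, abs_of_pos hfactor,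
    div_rpow hω hh'.le, show q - 2 = -(2 - q) by ring, rpow_neg hh'.le, div_eq_mul_inv]

theorem one_le_of_one_add_rpow_le_two_mul {s t : ℝ} (ht : 0 ≤ t) (hs0 : 0 ≤ s) (hs2 : s ≤ 2)
    (hst : 1 + t ^ s ≤ 2 * t) : 1 ≤ t := by
  by_contra! ht1
  have : t ^ (2 : ℝ) ≤ t ^ s := rpow_le_rpow_of_exponent_ge' ht ht1.le hs0 hs2
  rw [rpow_two] at this
  nlinarith

theorem min_le_half_b_general (q b ω h : ℝ) (hq0 : 0 < q) (hq2 : q ≤ 2)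
    (hωb : |b| / 2 ≤ ω)
    (hmin : ∀ β : ℝ, F ω q b h ≤ F ω q b β) :
    |h| ≤ |b| / 2 := by
  rcases eq_or_ne h 0 with rfl | hh
  · simp only [abs_zero]
    positivity
  have hh' : 0 < |h| := abs_pos.mpr hh
  have hω : 0 ≤ ω := (div_nonneg (abs_nonneg b) zero_le_two).trans hωb
  have hb := abs_eq_of_forall_F_le hω hq0.ne' hh hmin
  have ht : 1 ≤ ω / |h| := by
    refine one_le_of_one_add_rpow_le_two_mul (s := 2 - q) (by positivity) (by linarith)
      (by linarith) (le_of_mul_le_mul_left ?_ hh')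
    calc |h| * (1 + (ω / |h|) ^ (2 - q)) = |b| := hb.symm
      _ ≤ 2 * ω := by linarith
      _ = |h| * (2 * (ω / |h|)) := by field_simp
  nlinarith [one_le_rpow ht (by linarith : 0 ≤ 2 - q)]

/-- For `0 < q ≤ 2` and `ω ≥ |b|/2` with `ω > 0`: any global minimizer `h` of
`F ω q b` satisfies `|h| ≤ |b|/2`. -/
theorem min_le_half_b (q b ω h : ℝ) (hq0 : 0 < q) (hq2 : q ≤ 2)
    (hω : 0 < ω) (hωb : |b| / 2 ≤ ω)
    (hmin : ∀ β : ℝ, F ω q b h ≤ F ω q b β) :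
    |h| ≤ |b| / 2 :=
  min_le_half_b_general q b ω h hq0 hq2 hωb hmin
end

section
/- Let 0 < q < 1, b ∈ ℝ, and suppose ω > (|b|/(2−q))·(2(1−q))^((1−q)/(2−q))·q^(1/(2−q)). Then 0 is the unique global minimizer of F(ω, q, b): F(ω, q, b)(0) < F(ω, q, b)(β) for every β ≠ 0. (This is the condition on ω that guarantees h(ω, q; b) = 0 for q < 1.) -/
/-- For `0 < q < 1` and `ω > (|b|/(2−q))·(2(1−q))^((1−q)/(2−q))·q^(1/(2−q))`,
zero is the unique global minimizer of `F ω q b`. -/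
theorem zero_unique_min (q b ω : ℝ) (hq0 : 0 < q) (hq1 : q < 1)
    (hω : (|b| / (2 - q)) * (2 * (1 - q)) ^ ((1 - q) / (2 - q)) * q ^ (1 / (2 - q)) < ω) :
    ∀ β : ℝ, β ≠ 0 → F ω q b 0 < F ω q b β := by
  intro β hβ
  have hq2 : (0:ℝ) < 2 - q := by linarith
  have h1q : (0:ℝ) < 1 - q := by linarith
  set t := |β| with ht
  have htpos : 0 < t := abs_pos.mpr hβ
  have hR0 : 0 ≤ (|b| / (2 - q)) * (2 * (1 - q)) ^ ((1 - q) / (2 - q)) * q ^ (1 / (2 - q)) := by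
    positivity
  have hω0 : 0 < ω := lt_of_le_of_lt hR0 hω
  set c := ω ^ (2 - q) / q with hc
  have hcpos : 0 < c := by positivity
  set M := (|b| / (2 - q)) ^ (2 - q) * (2 * (1 - q)) ^ (1 - q) with hM
  have hM0 : 0 ≤ M := by positivity
  -- key: M < c
  have hMc : M < c := by
    have h1 := Real.rpow_lt_rpow hR0 hω hq2
    have h2 : ((|b| / (2 - q)) * (2 * (1 - q)) ^ ((1 - q) / (2 - q)) * q ^ (1 / (2 - q))) ^ (2 - q)
        = M * q := by
      rw [Real.mul_rpow (by positivity) (by positivity),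
          Real.mul_rpow (by positivity) (by positivity),
          ← Real.rpow_mul (by positivity : (0:ℝ) ≤ 2 * (1 - q)),
          ← Real.rpow_mul (le_of_lt hq0),
          div_mul_cancel₀ _ (ne_of_gt hq2), one_div,
          inv_mul_cancel₀ (ne_of_gt hq2), Real.rpow_one, hM]
    rw [h2] at h1
    rw [hc, lt_div_iff₀ hq0]
    exact h1
  -- weights
  set w₁ := (1 - q) / (2 - q) with hw₁
  set w₂ := 1 / (2 - q) with hw₂
  have hw₁0 : 0 ≤ w₁ := by positivity
  have hw₂0 : 0 ≤ w₂ := by positivity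
  have hwsum : w₁ + w₂ = 1 := by
    rw [hw₁, hw₂]; field_simp; ring
  set lam := (2 - q) / (2 * (1 - q)) with hlam
  have hlam0 : 0 < lam := by positivity
  set K := lam ^ w₁ * (c * (2 - q)) ^ w₂ with hK
  have hK0 : 0 < K := by positivity
  -- |b| < K
  have hbK : |b| < K := by
    by_contra h
    push_neg at h
    have h3 : K ^ (2 - q) ≤ |b| ^ (2 - q) := Real.rpow_le_rpow (le_of_lt hK0) h (le_of_lt hq2)
    have h4 : K ^ (2 - q) = lam ^ (1 - q) * (c * (2 - q)) := by
      rw [hK, Real.mul_rpow (by positivity) (by positivity),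
          ← Real.rpow_mul (le_of_lt hlam0), ← Real.rpow_mul (by positivity),
          hw₁, hw₂, div_mul_cancel₀ _ (ne_of_gt hq2), one_div,
          inv_mul_cancel₀ (ne_of_gt hq2), Real.rpow_one]
    have h5 : |b| ^ (2 - q) = lam ^ (1 - q) * (M * (2 - q)) := by
      rw [hM, hlam, Real.div_rpow (abs_nonneg b) (le_of_lt hq2),
          Real.div_rpow (le_of_lt hq2) (by positivity)]
      have e1 : (2 - q) ^ (2 - q) = (2 - q) ^ (1 - q) * (2 - q) := by
        have h := Real.rpow_add hq2 (1 - q) 1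
        rw [Real.rpow_one] at h
        rw [show (1 - q) + (1:ℝ) = 2 - q from by ring] at h
        exact h
      have d1 : (0:ℝ) < (2 * (1 - q)) ^ (1 - q) := Real.rpow_pos_of_pos (by positivity) _
      have d2 : (0:ℝ) < (2 - q) ^ (2 - q) := Real.rpow_pos_of_pos hq2 _
      rw [e1]
      field_simp
    have h6 : lam ^ (1 - q) * (M * (2 - q)) < lam ^ (1 - q) * (c * (2 - q)) :=
      mul_lt_mul_of_pos_left (mul_lt_mul_of_pos_right hMc hq2) (by positivity)
    rw [h4, h5] at h3; linarith
  -- Young: K * t ≤ (1/2) * t^2 + c * t ^ q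
  have hyoung : K * t ≤ (1/2) * t^2 + c * t ^ q := by
    have := Real.geom_mean_le_arith_mean2_weighted hw₁0 hw₂0
      (by positivity : (0:ℝ) ≤ lam * t^2) (by positivity : (0:ℝ) ≤ c * (2 - q) * t ^ q) hwsum
    have e1 : (lam * t^2) ^ w₁ * (c * (2 - q) * t ^ q) ^ w₂ = K * t := by
      rw [Real.mul_rpow (le_of_lt hlam0) (by positivity),
          Real.mul_rpow (by positivity) (by positivity)]
      have e2 : (t^2 : ℝ) ^ w₁ = t ^ ((2:ℝ) * w₁) := by
        rw [← Real.rpow_natCast t 2, ← Real.rpow_mul (le_of_lt htpos)]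
        norm_num
      have e3 : (t ^ q) ^ w₂ = t ^ (q * w₂) := by
        rw [← Real.rpow_mul (le_of_lt htpos)]
      rw [e2, e3, hK]
      have e4 : t ^ ((2:ℝ) * w₁) * t ^ (q * w₂) = t := by
        rw [← Real.rpow_add htpos]
        have : (2:ℝ) * w₁ + q * w₂ = 1 := by rw [hw₁, hw₂]; field_simp; ring
        rw [this, Real.rpow_one]
      calc lam ^ w₁ * t ^ ((2:ℝ) * w₁) * ((c * (2 - q)) ^ w₂ * t ^ (q * w₂))
          = lam ^ w₁ * (c * (2 - q)) ^ w₂ * (t ^ ((2:ℝ) * w₁) * t ^ (q * w₂)) := by ring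
        _ = lam ^ w₁ * (c * (2 - q)) ^ w₂ * t := by rw [e4]
    have e5 : w₁ * (lam * t^2) + w₂ * (c * (2 - q) * t ^ q) = (1/2) * t^2 + c * t ^ q := by
      rw [hw₁, hw₂, hlam]; field_simp
    rw [e1, e5] at this
    exact this
  -- conclude
  have htq0 : 0 < t ^ q := Real.rpow_pos_of_pos htpos q
  have hbβ : b * β ≤ |b| * t := by
    calc b * β ≤ |b * β| := le_abs_self _
      _ = |b| * t := by rw [abs_mul, ht]
  have hF0 : F ω q b 0 = (1/2) * b^2 := by
    simp [F, Real.zero_rpow (ne_of_gt hq0)]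
  have hFβ : F ω q b β = (1/2) * (b - β)^2 + c * t ^ q := by
    rw [F, hc, ht]
  rw [hF0, hFβ]
  have hKt : |b| * t < K * t := by
    exact mul_lt_mul_of_pos_right hbK htpos
  have htβ : t^2 = β^2 := sq_abs β
  nlinarith [hyoung, hKt, hbβ, htβ]
end

section
/- Fix ω > 0, b ∈ ℝ, 0 < q ≤ 2, and ω' > ω. For any global minimizer h of F(ω, q, b) and any global minimizer h' of F(ω', q, b), adding the two optimality inequalities (each evaluated at the other minimizer) yields ((ω^(2−q) − ω'^(2−q))/q)·|h|^q ≤ ((ω^(2−q) − ω'^(2−q))/q)·|h'|^q; consequently, if q < 2 then |h| ≥ |h'|. -/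
/-- For `ω' > ω > 0`, `0 < q ≤ 2`, any global minimizers `h` of `F ω q b` and
`h'` of `F ω' q b` satisfy
`((ω^(2−q) − ω'^(2−q))/q)·|h|^q ≤ ((ω^(2−q) − ω'^(2−q))/q)·|h'|^q`;
consequently if `q < 2` then `|h| ≥ |h'|`. -/
theorem combined_optimality_omega (ω ω' q b h h' : ℝ) (hω : 0 < ω)
    (hq0 : 0 < q) (hq2 : q ≤ 2) (hωω' : ω < ω')
    (hmin : ∀ β : ℝ, F ω q b h ≤ F ω q b β)
    (hmin' : ∀ β : ℝ, F ω' q b h' ≤ F ω' q b β) :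
    ((ω ^ (2 - q) - ω' ^ (2 - q)) / q) * |h| ^ q ≤
      ((ω ^ (2 - q) - ω' ^ (2 - q)) / q) * |h'| ^ q ∧
    (q < 2 → |h'| ≤ |h|) := by
  have A := hmin h'
  have B := hmin' h
  unfold F at A B
  have key : ((ω ^ (2 - q) - ω' ^ (2 - q)) / q) * |h| ^ q ≤
      ((ω ^ (2 - q) - ω' ^ (2 - q)) / q) * |h'| ^ q := by
    rw [sub_div, sub_mul, sub_mul]
    linarith
  refine ⟨key, fun hq2' => ?_⟩
  have hcoef : (ω ^ (2 - q) - ω' ^ (2 - q)) / q < 0 := by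
    apply div_neg_of_neg_of_pos _ hq0
    have := Real.rpow_lt_rpow hω.le hωω' (by linarith : (0:ℝ) < 2 - q)
    linarith
  have hpow : |h'| ^ q ≤ |h| ^ q := by
    by_contra hc
    push_neg at hc
    nlinarith [mul_lt_mul_of_neg_left hc hcoef]
  by_contra hc
  push_neg at hc
  exact absurd (Real.rpow_lt_rpow (abs_nonneg h) hc hq0) (not_lt.2 hpow)
end
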